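/- arXiv:cs/0703119 — 4 statements merged into one kernel-verified Lean document; each statement's English description precedes it below -/
import Mathlib

section
/- Let A_1,...,A_n and B_1,...,B_m be symmetric positive semidefinite matrices of the same size, A = Σ_i A_i, B = Σ_j B_j. Suppose for each i there is a subset Σ_i ⊆ {1,...,m} and a real s_i ≥ 0 such that A_i ⪯ s_i · Σ_{j∈Σ_i} B_j (Loewner order). Then A ⪯ c·B, where c = max over j of Σ_{i : j∈Σ_i} s_i. -/
/-!
Exchanging the order of summation, `∑ i, s i • ∑ j ∈ Sig i, B j = ∑ j, congestion j • B j`, so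
`c • B - A = ∑ i, (s i • ∑ j ∈ Sig i, B j - A i) + ∑ j, (c - congestion j) • B j`.
The first sum is PSD by hypothesis and the second because `c` bounds every congestion.
-/

open Matrix Finset

def congestion {ι κ R : Type*} [Fintype ι] [DecidableEq κ] [AddCommMonoid R]
    (Sig : ι → Finset κ) (s : ι → R) (j : κ) : R :=
  ∑ i with j ∈ Sig i, s i

section Congestion

variable {ι κ R V : Type*} [Fintype ι] [Fintype κ] [DecidableEq κ]

theorem sum_smul_sum_eq_sum_congestion_smul [Semiring R] [AddCommMonoid V] [Module R V]
    (Sig : ι → Finset κ) (s : ι → R) (B : κ → V) :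
    ∑ i, s i • ∑ j ∈ Sig i, B j = ∑ j, congestion Sig s j • B j := by
  simp_rw [Finset.smul_sum, congestion, Finset.sum_smul]
  exact Finset.sum_comm' fun i j => by simp

theorem smul_sum_sub_sum_eq_sum_sub_add_sum_congestion_smul [Ring R] [AddCommGroup V]
    [Module R V] (Sig : ι → Finset κ) (s : ι → R) (A : ι → V) (B : κ → V) (c : R) :
    c • ∑ j, B j - ∑ i, A i =
      ∑ i, (s i • ∑ j ∈ Sig i, B j - A i) + ∑ j, (c - congestion Sig s j) • B j := by
  simp_rw [Finset.sum_sub_distrib, sub_smul, Finset.sum_sub_distrib,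
    sum_smul_sum_eq_sum_congestion_smul, Finset.smul_sum]
  abel

end Congestion

theorem congestion_dilation_general (d N M : ℕ)
    (A : Fin N → Matrix (Fin d) (Fin d) ℝ)
    (B : Fin M → Matrix (Fin d) (Fin d) ℝ)
    (hB : ∀ j, (B j).PosSemidef)
    (Sig : Fin N → Finset (Fin M)) (s : Fin N → ℝ)
    (hsupport : ∀ i, (s i • ∑ j ∈ Sig i, B j - A i).PosSemidef)
    (c : ℝ)
    (hc : IsGreatest {t : ℝ | ∃ j : Fin M,
        t = ∑ i ∈ Finset.univ.filter (fun i => j ∈ Sig i), s i} c) :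
    (c • ∑ j, B j - ∑ i, A i).PosSemidef := by
  rw [smul_sum_sub_sum_eq_sum_sub_add_sum_congestion_smul Sig s]
  refine (posSemidef_sum _ fun i _ => hsupport i).add
    (posSemidef_sum _ fun j _ => (hB j).smul ?_)
  exact sub_nonneg.2 (hc.2 ⟨j, rfl⟩)

/-- Congestion-Dilation Lemma. -/
theorem congestion_dilation (d N M : ℕ)
    (A : Fin N → Matrix (Fin d) (Fin d) ℝ)
    (B : Fin M → Matrix (Fin d) (Fin d) ℝ)
    (hA : ∀ i, (A i).PosSemidef) (hB : ∀ j, (B j).PosSemidef)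
    (Sig : Fin N → Finset (Fin M)) (s : Fin N → ℝ) (hs : ∀ i, 0 ≤ s i)
    (hsupport : ∀ i, (s i • ∑ j ∈ Sig i, B j - A i).PosSemidef)
    (c : ℝ)
    (hc : IsGreatest {t : ℝ | ∃ j : Fin M,
        t = ∑ i ∈ Finset.univ.filter (fun i => j ∈ Sig i), s i} c) :
    (c • ∑ j, B j - ∑ i, A i).PosSemidef :=
  congestion_dilation_general d N M A B hB Sig s hsupport c hc
end

section
/- Let u_1, u_2 be unit vectors in R^2 whose angles differ by θ, and let a, b > 0. Then for every vector v in R^2: (u_1^T v)^2 / a + (u_2^T v)^2 / b ≥ sin^2(θ)·|v|^2 / (a+b). -/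
open Matrix

theorem two_unit_vectors_lower_bound (u1 u2 v : Fin 2 → ℝ) (θ a b : ℝ)
    (hu1 : u1 ⬝ᵥ u1 = 1) (hu2 : u2 ⬝ᵥ u2 = 1)
    (hθ : u1 ⬝ᵥ u2 = Real.cos θ) (ha : 0 < a) (hb : 0 < b) :
    Real.sin θ ^ 2 * (v ⬝ᵥ v) / (a + b) ≤ (u1 ⬝ᵥ v) ^ 2 / a + (u2 ⬝ᵥ v) ^ 2 / b := by
  have hs : Real.sin θ ^ 2 = 1 - Real.cos θ ^ 2 := Real.sin_sq θ
  simp only [dotProduct, Fin.sum_univ_two] at *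
  set p := u1 0; set q := u1 1; set r := u2 0; set s := u2 1
  set c := v 0; set d := v 1
  set x := p * c + q * d with hx
  set y := r * c + s * d with hy
  set T := Real.cos θ with hT
  have key : x ^ 2 + y ^ 2 - 2 * T * x * y = (1 - T ^ 2) * (c * c + d * d) := by
    linear_combination (-(y^2) + (c*c+d*d)) * hu1 + (-(x^2) + (c*c+d*d)*(p*p+q*q)) * hu2 +
      (2*x*y - (p*r+q*s+T)*(c*c+d*d)) * hθ
  rw [div_add_div _ _ (ne_of_gt ha) (ne_of_gt hb), div_le_div_iff₀ (by linarith) (by positivity)]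
  have h1 : T ≤ 1 := Real.cos_le_one θ
  have h2 : -1 ≤ T := Real.neg_one_le_cos θ
  rw [hs]
  have key' : (1 - T ^ 2) * (c * c + d * d) * (a * b) =
      (x ^ 2 + y ^ 2 - 2 * T * x * y) * (a * b) := by rw [key]
  nlinarith [key', mul_nonneg (by linarith : (0:ℝ) ≤ 1 + T) (sq_nonneg (b*x + a*y)),
    mul_nonneg (by linarith : (0:ℝ) ≤ 1 - T) (sq_nonneg (b*x - a*y))]
end

section
/- For any angles α, θ and positive reals a, b: (cos^2 α)/a + (cos^2(α+θ))/b ≥ (sin^2 θ)/(a+b). -/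
theorem cos_sq_lower_bound (α θ a b : ℝ) (ha : 0 < a) (hb : 0 < b) :
    Real.sin θ ^ 2 / (a + b) ≤ Real.cos α ^ 2 / a + Real.cos (α + θ) ^ 2 / b := by
  set c1 := Real.cos α with hc1
  set c2 := Real.cos (α + θ) with hc2
  set s1 := Real.sin α with hs1
  set s2 := Real.sin (α + θ) with hs2
  set K := Real.cos θ with hKdef
  have hs : Real.sin θ = s2 * c1 - c2 * s1 := by
    have := Real.sin_sub (α + θ) α
    simpa using this
  have hc : K = c2 * c1 + s2 * s1 := by
    have := Real.cos_sub (α + θ) α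
    simpa using this
  have h1 : s1 ^ 2 + c1 ^ 2 = 1 := Real.sin_sq_add_cos_sq α
  have h2 : s2 ^ 2 + c2 ^ 2 = 1 := Real.sin_sq_add_cos_sq (α + θ)
  have hK1 : K ≤ 1 := Real.cos_le_one θ
  have hK2 : -1 ≤ K := Real.neg_one_le_cos θ
  have expand : (c1 ^ 2 * b + c2 ^ 2 * a) * (a + b) - (s2 * c1 - c2 * s1) ^ 2 * (a * b)
      = a * b * (2 * c1 * c2 * K) + c1 ^ 2 * b ^ 2 + c2 ^ 2 * a ^ 2 := by
    linear_combination (-(a * b * c1 ^ 2)) * h2 + (-(a * b * c2 ^ 2)) * h1 +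
      (-2 * a * b * c1 * c2) * hc
  have hint1 : 0 ≤ (1 - K) * (c1 * b - c2 * a) ^ 2 :=
    mul_nonneg (by linarith) (sq_nonneg _)
  have hint2 : 0 ≤ (1 + K) * (c1 * b + c2 * a) ^ 2 :=
    mul_nonneg (by linarith) (sq_nonneg _)
  rw [hs, div_add_div _ _ (ne_of_gt ha) (ne_of_gt hb),
    div_le_div_iff₀ (by linarith) (by positivity)]
  nlinarith [expand, hint1, hint2]
end

section
/- Let x^*_0,...,x^*_{n+1} ∈ R^2, let s: {2,...,n+1} → {0,...,n}, σ: {2,...,n+1} → {0,...,n} with s(i),σ(i) < i, and suppose d_1 = x^*_1 − x^*_0 and for 2 ≤ i ≤ n+1, d_i = x^*_i − x^*_{s(i)} + R_i(x^*_{s(i)} − x^*_{σ(i)}), where R_i = ((v_i − v_{s(i)})^⊥ (v_i − v_{σ(i)})^T) / ((v_i − v_{σ(i)})^T (v_i − v_{s(i)})^⊥) for points v_0,...,v_{n+1} ∈ R^2 with (v_i − v_{σ(i)})^T (v_i − v_{s(i)})^⊥ ≠ 0. Then for every i ≥ 2, both (v_i − v_{s(i)})^T (x^*_i − x^*_{s(i)})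 = (v_i − v_{s(i)})^T d_i and (v_i − v_{σ(i)})^T (x^*_i − x^*_{σ(i)}) = (v_i − v_{σ(i)})^T d_i. -/
open Matrix

/-- The counterclockwise perpendicular of a vector in ℝ². -/
def perp (v : Fin 2 → ℝ) : Fin 2 → ℝ := ![-v 1, v 0]

lemma dot_perp_self (w : Fin 2 → ℝ) : w ⬝ᵥ perp w = 0 := by
  simp [perp, dotProduct, Fin.sum_univ_two]; ring

lemma dot_vecMulVec (w a b u : Fin 2 → ℝ) :
    w ⬝ᵥ (Matrix.vecMulVec a b *ᵥ u) = (w ⬝ᵥ a) * (b ⬝ᵥ u) := by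
  simp [Matrix.vecMulVec, Matrix.mulVec, dotProduct, Fin.sum_univ_two]; ring

/-- Property 1 of the correction vectors d_i in the Path Lemma. -/
theorem d_correction_property (n : ℕ) (v x d : ℕ → Fin 2 → ℝ) (s σ : ℕ → ℕ)
    (hs : ∀ i, 2 ≤ i → i ≤ n + 1 → s i < i)
    (hσ : ∀ i, 2 ≤ i → i ≤ n + 1 → σ i < i)
    (hnd : ∀ i, 2 ≤ i → i ≤ n + 1 →
      (v i - v (σ i)) ⬝ᵥ perp (v i - v (s i)) ≠ 0)
    (hd1 : d 1 = x 1 - x 0)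
    (hd : ∀ i, 2 ≤ i → i ≤ n + 1 →
      d i = x i - x (s i) +
        ((v i - v (σ i)) ⬝ᵥ perp (v i - v (s i)))⁻¹ •
          (Matrix.vecMulVec (perp (v i - v (s i))) (v i - v (σ i)) *ᵥ
            (x (s i) - x (σ i)))) :
    ∀ i, 2 ≤ i → i ≤ n + 1 →
      (v i - v (s i)) ⬝ᵥ (x i - x (s i)) = (v i - v (s i)) ⬝ᵥ d i ∧
      (v i - v (σ i)) ⬝ᵥ (x i - x (σ i)) = (v i - v (σ i)) ⬝ᵥ d i := by
  intro i h2 hn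
  rw [hd i h2 hn]
  rw [dotProduct_add, dotProduct_add, dotProduct_smul, dotProduct_smul,
    dot_vecMulVec, dot_vecMulVec, dot_perp_self]
  constructor
  · simp
  · have hb : (v i - v (σ i)) ⬝ᵥ perp (v i - v (s i)) ≠ 0 := hnd i h2 hn
    rw [smul_eq_mul, ← mul_assoc, inv_mul_cancel₀ hb, one_mul, ← dotProduct_add]
    congr 1
    abel
end
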